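/- For every integer d with 0 ≤ d ≤ n/2, the real vector space H_{n,d} of harmonic multilinear polynomials in x₁,…,xₙ of degree at most d has dimension C(n,d). -/

import Mathlib

open MvPolynomial

/-- A multilinear polynomial: every monomial is squarefree. -/
def IsMultilinear {n : ℕ} (P : MvPolynomial (Fin n) ℝ) : Prop :=
  ∀ m ∈ P.support, ∀ i, m i ≤ 1

/-- A harmonic polynomial: the sum of all partial derivatives vanishes. -/
def IsHarmonic {n : ℕ} (P : MvPolynomial (Fin n) ℝ) : Prop :=
  ∑ i, MvPolynomial.pderiv i P = 0

/-- The space `H_{n,d}` of harmonic multilinear polynomials of degree at most `d`. -/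
noncomputable def harmonicMultilinearLe (n d : ℕ) : Submodule ℝ (MvPolynomial (Fin n) ℝ) where
  carrier := {P | IsMultilinear P ∧ IsHarmonic P ∧ P.totalDegree ≤ d}
  add_mem' := by
    rintro P Q ⟨hP1, hP2, hP3⟩ ⟨hQ1, hQ2, hQ3⟩
    refine ⟨?_, ?_, ?_⟩
    · intro m hm i
      rcases Finset.mem_union.mp (MvPolynomial.support_add hm) with h | h
      · exact hP1 m h i
      · exact hQ1 m h i
    · unfold IsHarmonic at *
      simp only [map_add, Finset.sum_add_distrib, hP2, hQ2, add_zero]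
    · exact le_trans (MvPolynomial.totalDegree_add P Q) (max_le hP3 hQ3)
  zero_mem' := by
    refine ⟨?_, ?_, ?_⟩
    · intro m hm i
      simp [MvPolynomial.support_zero] at hm
    · simp [IsHarmonic]
    · simp
  smul_mem' := by
    rintro c P ⟨hP1, hP2, hP3⟩
    refine ⟨?_, ?_, ?_⟩
    · intro m hm i
      exact hP1 m (MvPolynomial.support_smul hm) i
    · unfold IsHarmonic at *
      rw [show (∑ i, MvPolynomial.pderiv i (c • P)) = c • ∑ i, MvPolynomial.pderiv i P by
        rw [Finset.smul_sum]; exact Finset.sum_congr rfl fun i _ => (MvPolynomial.pderiv i).map_smul c P, hP2, smul_zero]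
    · exact le_trans (MvPolynomial.totalDegree_smul_le c P) hP3

/-!
Record a multilinear polynomial by its coefficient vector `f : Finset (Fin n) → ℝ`, where `f S`
is the coefficient of `∏_{i ∈ S} xᵢ`. Then `∑ ∂ᵢ` becomes the down operator `D` of the Boolean
lattice, whose adjoint is the up operator `U` (multiplication by `x₁ + ⋯ + xₙ`), and
`(D U - U D) f S = (n - 2 |S|) f S`. Hence `⟪D U s, s⟫ = ‖D s‖² + ∑ (n - 2 |S|) (s S)² > 0` for
every nonzero `s` supported on sets of size `< n / 2`. Such an `s` orthogonal to the image of
`D` on degree `≤ d` would have `⟪D U s, s⟫ = 0`, so for `2 d ≤ n` this image is everything of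
degree `< d`, and the kernel `H_{n,d}` has dimension `∑_{k ≤ d} C(n,k) - ∑_{k < d} C(n,k)`.
-/

open Finset

namespace HarmonicMultilinear

section SubsetSpace

variable {α : Type*}

def supportedOn (A : Set (Finset α)) : Submodule ℝ (EuclideanSpace ℝ (Finset α)) where
  carrier := {f | ∀ S ∉ A, f S = 0}
  add_mem' hf hg S hS := by simp [hf S hS, hg S hS]
  zero_mem' _ _ := rfl
  smul_mem' c f hf S hS := by simp [hf S hS]

section Dimension

variable [Fintype α]

open Classical in
noncomputable def supportedOnEquiv (A : Set (Finset α)) : supportedOn A ≃ₗ[ℝ] (A → ℝ) where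
  toFun f S := f.1 S
  invFun g := ⟨WithLp.toLp 2 fun S => if h : S ∈ A then g ⟨S, h⟩ else 0, fun S hS => by simp [hS]⟩
  left_inv f := by
    ext S
    by_cases h : S ∈ A
    · simp [h]
    · simp [h, f.2 S h]
  right_inv g := by ext S; simp [S.2]
  map_add' _ _ := rfl
  map_smul' _ _ := rfl

theorem finrank_supportedOn (A : Set (Finset α)) :
    Module.finrank ℝ (supportedOn A) = A.ncard := by
  classical
  rw [(supportedOnEquiv A).finrank_eq, Module.finrank_pi, ← Nat.card_eq_fintype_card,
    Nat.card_coe_set_eq]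

theorem ncard_setOf_card_lt_succ (m : ℕ) :
    {S : Finset α | #S < m + 1}.ncard =
      {S : Finset α | #S < m}.ncard + (Fintype.card α).choose m := by
  have hunion : {S : Finset α | #S < m + 1} = {S | #S < m} ∪ {S | #S = m} := by
    ext S
    simp only [Set.mem_ofPred_eq, Set.mem_union]
    omega
  rw [hunion, Set.ncard_union_eq (Set.disjoint_left.mpr fun S h h' => by simp_all),
    ← Fintype.card_finset_len, ← Nat.card_eq_fintype_card]
  rfl

end Dimension

variable [DecidableEq α]

noncomputable def up : EuclideanSpace ℝ (Finset α) →ₗ[ℝ] EuclideanSpace ℝ (Finset α) where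
  toFun f := WithLp.toLp 2 fun S => ∑ i ∈ S, f (S.erase i)
  map_add' f g := by ext S; simp [sum_add_distrib]
  map_smul' c f := by ext S; simp [mul_sum]

theorem up_apply (f : EuclideanSpace ℝ (Finset α)) (S : Finset α) :
    up f S = ∑ i ∈ S, f (S.erase i) :=
  rfl

theorem up_mem_supportedOn_card_lt {m : ℕ} {f : EuclideanSpace ℝ (Finset α)}
    (hf : f ∈ supportedOn {S | #S < m}) : up f ∈ supportedOn {S | #S < m + 1} := by
  intro S hS
  refine sum_eq_zero fun i hi => hf _ ?_
  simp only [Set.mem_ofPred_eq, not_lt] at hS ⊢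
  rw [card_erase_of_mem hi]
  omega

variable [Fintype α]

noncomputable def down : EuclideanSpace ℝ (Finset α) →ₗ[ℝ] EuclideanSpace ℝ (Finset α) where
  toFun f := WithLp.toLp 2 fun S => ∑ i ∈ Sᶜ, f (insert i S)
  map_add' f g := by ext S; simp [sum_add_distrib]
  map_smul' c f := by ext S; simp [mul_sum]

theorem down_apply (f : EuclideanSpace ℝ (Finset α)) (S : Finset α) :
    down f S = ∑ i ∈ Sᶜ, f (insert i S) :=
  rfl

theorem down_mem_supportedOn_card_lt {m : ℕ} {f : EuclideanSpace ℝ (Finset α)}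
    (hf : f ∈ supportedOn {S | #S < m + 1}) : down f ∈ supportedOn {S | #S < m} := by
  intro S hS
  refine sum_eq_zero fun i hi => hf _ ?_
  simp only [Set.mem_ofPred_eq, not_lt] at hS ⊢
  rw [card_insert_of_notMem (mem_compl.mp hi)]
  omega

theorem sum_sum_mem_eq_sum_sum_notMem_insert {M : Type*} [AddCommMonoid M]
    (F : Finset α → α → M) :
    ∑ S, ∑ i ∈ S, F S i = ∑ T, ∑ i ∈ Tᶜ, F (insert i T) i := by
  rw [sum_sigma', sum_sigma']
  refine sum_nbij' (fun p => ⟨p.1.erase p.2, p.2⟩) (fun p => ⟨insert p.2 p.1, p.2⟩)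
    ?_ ?_ ?_ ?_ ?_ <;> rintro ⟨S, i⟩ h <;> simp_all

theorem inner_down_left (f g : EuclideanSpace ℝ (Finset α)) :
    inner ℝ (down f) g = inner ℝ f (up g) := by
  simp only [PiLp.inner_apply, RCLike.inner_apply, conj_trivial, down_apply, up_apply,
    sum_mul, mul_sum]
  rw [sum_sum_mem_eq_sum_sum_notMem_insert fun S i => g (S.erase i) * f S]
  refine sum_congr rfl fun T _ => sum_congr rfl fun i hi => ?_
  rw [erase_insert (mem_compl.mp hi)]

theorem down_up_apply (f : EuclideanSpace ℝ (Finset α)) (S : Finset α) :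
    down (up f) S = up (down f) S + (Fintype.card α - 2 * #S : ℝ) * f S := by
  have hdu : down (up f) S = ∑ i ∈ Sᶜ, (f S + ∑ j ∈ S, f (insert i (S.erase j))) := by
    refine sum_congr rfl fun i hi => ?_
    have hi : i ∉ S := mem_compl.mp hi
    rw [up_apply, sum_insert hi, erase_insert hi]
    congr 1
    exact sum_congr rfl fun j hj => by rw [erase_insert_of_ne (ne_of_mem_of_not_mem hj hi).symm]
  have hud : up (down f) S = ∑ j ∈ S, (f S + ∑ i ∈ Sᶜ, f (insert i (S.erase j))) := by
    refine sum_congr rfl fun j hj => ?_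
    rw [down_apply, compl_erase, sum_insert (by simpa using hj), insert_erase hj]
  have hcard : (#Sᶜ : ℝ) = Fintype.card α - #S := by
    rw [card_compl, Nat.cast_sub (card_le_univ S)]
  rw [hdu, hud, sum_add_distrib, sum_add_distrib, sum_comm, sum_const, sum_const, nsmul_eq_mul,
    nsmul_eq_mul, hcard]
  ring

theorem inner_down_up_self (f : EuclideanSpace ℝ (Finset α)) :
    inner ℝ (down (up f)) f = ‖down f‖ ^ 2 + ∑ S, (Fintype.card α - 2 * #S : ℝ) * f S ^ 2 := by
  have hud : inner ℝ (up (down f)) f = ‖down f‖ ^ 2 := by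
    rw [real_inner_comm, ← inner_down_left, real_inner_self_eq_norm_sq]
  rw [← hud]
  simp only [PiLp.inner_apply, RCLike.inner_apply, conj_trivial, down_up_apply, mul_add,
    sum_add_distrib]
  congr 1
  exact sum_congr rfl fun S _ => by ring

theorem inner_down_up_self_pos {A : Set (Finset α)} (hA : ∀ S ∈ A, 2 * #S < Fintype.card α)
    {f : EuclideanSpace ℝ (Finset α)} (hf : f ∈ supportedOn A) (hf0 : f ≠ 0) :
    0 < inner ℝ (down (up f)) f := by
  obtain ⟨S, hS⟩ : ∃ S, f S ≠ 0 := by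
    by_contra! h
    exact hf0 (PiLp.ext h)
  have hweight : ∀ T, f T ≠ 0 → (0 : ℝ) < Fintype.card α - 2 * #T := fun T hT => by
    have := hA T (by_contra fun h => hT (hf T h))
    rw [sub_pos]
    exact_mod_cast this
  rw [inner_down_up_self]
  refine add_pos_of_nonneg_of_pos (sq_nonneg _) (sum_pos' (fun T _ => ?_) ⟨S, mem_univ S, ?_⟩)
  · by_cases hT : f T = 0
    · simp [hT]
    · exact mul_nonneg (hweight T hT).le (sq_nonneg _)
  · exact mul_pos (hweight S hS) (by positivity)

theorem map_down_supportedOn_card_lt {m : ℕ} (hm : 2 * m ≤ Fintype.card α) :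
    (supportedOn {S : Finset α | #S < m + 1}).map down = supportedOn {S | #S < m} := by
  set R := (supportedOn {S : Finset α | #S < m + 1}).map down
  have hR : R ≤ supportedOn {S | #S < m} :=
    Submodule.map_le_iff_le_comap.mpr fun f hf => down_mem_supportedOn_card_lt hf
  refine le_antisymm hR fun g hg => ?_
  obtain ⟨r, hr, s, hs, rfl⟩ := R.exists_add_mem_mem_orthogonal g
  have hs' : s ∈ supportedOn {S | #S < m} := by
    simpa using sub_mem hg (hR hr)
  suffices s = 0 by simpa [this] using hr
  by_contra hs0
  have hpos := inner_down_up_self_pos (fun S hS => by simp only [Set.mem_ofPred_eq] at hS; omega)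
    hs' hs0
  have hDUs : down (up s) ∈ R := ⟨up s, up_mem_supportedOn_card_lt hs', rfl⟩
  exact hpos.ne' ((Submodule.mem_orthogonal _ _).mp hs _ hDUs)

theorem finrank_supportedOn_inf_ker_down {m : ℕ} (hm : 2 * m ≤ Fintype.card α) :
    Module.finrank ℝ ↥(supportedOn {S : Finset α | #S < m + 1} ⊓ LinearMap.ker down) =
      (Fintype.card α).choose m := by
  have h :=
    (down.domRestrict (supportedOn {S : Finset α | #S < m + 1})).finrank_range_add_finrank_ker
  rw [LinearMap.range_domRestrict, map_down_supportedOn_card_lt hm, LinearMap.ker_domRestrict,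
    ← Submodule.finrank_map_subtype_eq, Submodule.map_comap_subtype, finrank_supportedOn,
    finrank_supportedOn, ncard_setOf_card_lt_succ] at h
  omega

end SubsetSpace

section Polynomial

variable {σ : Type*} [DecidableEq σ]

noncomputable def squarefreeExponent (S : Finset σ) : σ →₀ ℕ := Multiset.toFinsupp S.val

theorem squarefreeExponent_apply (S : Finset σ) (i : σ) :
    squarefreeExponent S i = if i ∈ S then 1 else 0 :=
  Multiset.count_eq_of_nodup S.nodup

theorem squarefreeExponent_le_one (S : Finset σ) (i : σ) : squarefreeExponent S i ≤ 1 := by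
  rw [squarefreeExponent_apply]; split_ifs <;> omega

theorem squarefreeExponent_support {m : σ →₀ ℕ} (hm : ∀ i, m i ≤ 1) :
    squarefreeExponent m.support = m := by
  ext i
  simp only [squarefreeExponent_apply, Finsupp.mem_support_iff]
  have := hm i
  split_ifs <;> omega

theorem squarefreeExponent_injective : Function.Injective (squarefreeExponent (σ := σ)) :=
  fun _ _ h => Finset.val_injective (Multiset.toFinsupp.injective h)

theorem sum_squarefreeExponent (S : Finset σ) : ((squarefreeExponent S).sum fun _ e => e) = #S :=
  Multiset.toFinsupp_sum_eq S.val

theorem squarefreeExponent_erase (S : Finset σ) (i : σ) :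
    squarefreeExponent (S.erase i) = squarefreeExponent S - Finsupp.single i 1 := by
  ext j
  simp only [Finsupp.tsub_apply, squarefreeExponent_apply, Finsupp.single_apply, mem_erase]
  split_ifs <;> grind

theorem pderiv_monomial_squarefreeExponent (i : σ) (S : Finset σ) (c : ℝ) :
    pderiv i (monomial (squarefreeExponent S) c) =
      if i ∈ S then monomial (squarefreeExponent (S.erase i)) c else 0 := by
  rw [pderiv_monomial, squarefreeExponent_apply]
  split_ifs with hi
  · rw [Nat.cast_one, mul_one, squarefreeExponent_erase]
  · simp

variable [Fintype σ]

noncomputable def toMvPolynomial : EuclideanSpace ℝ (Finset σ) →ₗ[ℝ] MvPolynomial σ ℝ :=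
  ∑ S, monomial (squarefreeExponent S) ∘ₗ (EuclideanSpace.proj S).toLinearMap

theorem toMvPolynomial_apply (f : EuclideanSpace ℝ (Finset σ)) :
    toMvPolynomial f = ∑ S, monomial (squarefreeExponent S) (f S) := by
  simp [toMvPolynomial]

theorem coeff_squarefreeExponent_toMvPolynomial (f : EuclideanSpace ℝ (Finset σ)) (S : Finset σ) :
    coeff (squarefreeExponent S) (toMvPolynomial f) = f S := by
  rw [toMvPolynomial_apply, coeff_sum]
  simp [coeff_monomial, squarefreeExponent_injective.eq_iff]

theorem mem_support_toMvPolynomial {f : EuclideanSpace ℝ (Finset σ)} {m : σ →₀ ℕ} :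
    m ∈ (toMvPolynomial f).support ↔ ∃ S, f S ≠ 0 ∧ squarefreeExponent S = m := by
  refine ⟨fun hm => ?_, ?_⟩
  · rw [mem_support_iff, toMvPolynomial_apply, coeff_sum] at hm
    obtain ⟨S, -, hS⟩ := exists_ne_zero_of_sum_ne_zero hm
    rw [coeff_monomial] at hS
    split_ifs at hS with h
    · exact ⟨S, hS, h⟩
    · exact absurd rfl hS
  · rintro ⟨S, hS, rfl⟩
    rwa [mem_support_iff, coeff_squarefreeExponent_toMvPolynomial]

theorem toMvPolynomial_injective : Function.Injective (toMvPolynomial (σ := σ)) :=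
  fun f g h => PiLp.ext fun S => by
    rw [← coeff_squarefreeExponent_toMvPolynomial, h, coeff_squarefreeExponent_toMvPolynomial]

theorem sum_pderiv_toMvPolynomial (f : EuclideanSpace ℝ (Finset σ)) :
    ∑ i, pderiv i (toMvPolynomial f) = toMvPolynomial (down f) := by
  calc ∑ i, pderiv i (toMvPolynomial f)
      = ∑ S, ∑ i ∈ S, monomial (squarefreeExponent (S.erase i)) (f S) := by
        simp only [toMvPolynomial_apply, map_sum, pderiv_monomial_squarefreeExponent]
        rw [sum_comm]
        exact sum_congr rfl fun S _ => by rw [sum_ite_mem, univ_inter]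
    _ = ∑ T, ∑ i ∈ Tᶜ, monomial (squarefreeExponent T) (f (insert i T)) := by
        rw [sum_sum_mem_eq_sum_sum_notMem_insert]
        exact sum_congr rfl fun T _ => sum_congr rfl fun i hi => by
          rw [erase_insert (mem_compl.mp hi)]
    _ = toMvPolynomial (down f) := by
        simp only [toMvPolynomial_apply, down_apply, map_sum]

theorem totalDegree_toMvPolynomial_le {d : ℕ} {f : EuclideanSpace ℝ (Finset σ)}
    (hf : f ∈ supportedOn {S | #S < d + 1}) : (toMvPolynomial f).totalDegree ≤ d := by
  refine Finset.sup_le fun m hm => ?_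
  obtain ⟨S, hS, rfl⟩ := mem_support_toMvPolynomial.mp hm
  have : #S < d + 1 := by_contra fun h => hS (hf S h)
  rw [sum_squarefreeExponent]
  omega

end Polynomial

section Multilinear

variable {n : ℕ}

theorem isMultilinear_toMvPolynomial (f : EuclideanSpace ℝ (Finset (Fin n))) :
    IsMultilinear (toMvPolynomial f) := by
  intro m hm i
  obtain ⟨S, -, rfl⟩ := mem_support_toMvPolynomial.mp hm
  exact squarefreeExponent_le_one S i

theorem toMvPolynomial_coeff_squarefreeExponent {P : MvPolynomial (Fin n) ℝ}
    (hP : IsMultilinear P) :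
    toMvPolynomial (WithLp.toLp 2 fun S => coeff (squarefreeExponent S) P) = P := by
  ext m
  by_cases hm : m ∈ P.support
  · rw [← squarefreeExponent_support (hP m hm), coeff_squarefreeExponent_toMvPolynomial]
  · rw [notMem_support_iff.mp hm, ← notMem_support_iff, mem_support_toMvPolynomial]
    rintro ⟨S, hS, rfl⟩
    exact hm (mem_support_iff.mpr hS)

theorem map_toMvPolynomial_supportedOn_inf_ker_down (d : ℕ) :
    (supportedOn {S : Finset (Fin n) | #S < d + 1} ⊓ LinearMap.ker down).map toMvPolynomial =
      harmonicMultilinearLe n d := by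
  apply le_antisymm
  · rintro P ⟨f, ⟨hfd, hfker⟩, rfl⟩
    refine ⟨isMultilinear_toMvPolynomial f, ?_, totalDegree_toMvPolynomial_le hfd⟩
    rw [IsHarmonic, sum_pderiv_toMvPolynomial, LinearMap.mem_ker.mp hfker, map_zero]
  · rintro P ⟨hPmult, hPharm, hPdeg⟩
    refine ⟨_, ⟨fun S hS => ?_, ?_⟩, toMvPolynomial_coeff_squarefreeExponent hPmult⟩
    · by_contra h
      have := le_totalDegree (mem_support_iff.mpr h)
      simp only [Set.mem_ofPred_eq, not_lt] at hS
      rw [sum_squarefreeExponent] at this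
      omega
    · apply toMvPolynomial_injective
      rw [map_zero, ← sum_pderiv_toMvPolynomial, toMvPolynomial_coeff_squarefreeExponent hPmult]
      exact hPharm

end Multilinear

end HarmonicMultilinear

theorem finrank_harmonicMultilinearLe {n d : ℕ} (hd : 2 * d ≤ n) :
    Module.finrank ℝ (harmonicMultilinearLe n d) = n.choose d := by
  rw [← HarmonicMultilinear.map_toMvPolynomial_supportedOn_inf_ker_down,
    ← LinearEquiv.finrank_eq (Submodule.equivMapOfInjective _
      HarmonicMultilinear.toMvPolynomial_injective _),
    HarmonicMultilinear.finrank_supportedOn_inf_ker_down (by rwa [Fintype.card_fin]),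
    Fintype.card_fin]
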